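/- arXiv:1506.06318 — 5 statements merged into one kernel-verified Lean document; each statement's English description precedes it below -/
import Mathlib

section
/- Let n ≥ 1, ε ∈ (0,1], γ ∈ (0,1/2], and let y : Fin n → ℝ take values in {−1,1}. Let T be a natural number with T > 2·log(1/ε)/γ². Suppose we are given hypotheses h¹,…,h^T : Fin n → ℝ, each taking values in {−1,1}, and distributions D¹,…,D^T on Fin n such that: (i) D¹ is the uniform distribution on Fin n; (ii) each D^t is ε-smooth; (iii) (weak learning) for every t, ∑_i D^t(i)·1[h^t(i) = y(i)] ≥ 1/2 + γ; (iv) (multiplicative update and projection) for every t < T, letting ℓ^t(i) = 1[h^t(i) = y(i)], Z^t = ∑_i D^t(i)·(1−γ)^{ℓ^t(i)}, and D̂^{t+1}(i) = D^t(i)·(1−γ)^{ℓ^t(i)}/Z^t, the distribution D^{t+1} satisfies RE(D^{t+1} ‖ D̂^{t+1}) ≤ RE(D ‖ D̂^{t+1}) for every ε-smooth distribution D on Fin n. Then the majority-vote hypothesis errs on fewer than εn points, i.e., the cardinality of {i : y(i)·∑_{t=1}^T h^t(i) ≤ 0} is strictly less than ε·n. -/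
/-- `D` is a probability distribution on `Fin n`. -/
def IsDistribution {n : ℕ} (D : Fin n → ℝ) : Prop :=
  (∀ i, 0 ≤ D i) ∧ ∑ i, D i = 1

/-- `D` is `ε`-smooth: every coordinate is at most `1/(ε·n)`. -/
def IsSmooth {n : ℕ} (ε : ℝ) (D : Fin n → ℝ) : Prop :=
  ∀ i, D i ≤ 1 / (ε * n)

/-- Relative entropy `RE(p ‖ q) = ∑ i, p i · log (p i / q i)`, where terms with
`p i = 0` contribute `0`. -/
noncomputable def RE {n : ℕ} (p q : Fin n → ℝ) : ℝ :=
  ∑ i, if p i = 0 then 0 else p i * Real.log (p i / q i)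

/-!
Suppose the majority vote erred on a set `E` with `#E ≥ ε n`. Then the uniform distribution `P`
on `E` is `ε`-smooth, and we follow the potential `RE(P ‖ Dᵗ)`. It starts at
`log (n / #E) ≤ log (1 / ε)`. The multiplicative update changes it by
`log Zᵗ - log (1 - γ) · P(hᵗ = y)`, and the projection step cannot increase it, by the
Pythagorean inequality for relative-entropy projections onto the convex set of `ε`-smooth
distributions. Weak learning gives `Zᵗ ≤ 1 - γ (1/2 + γ)`, and every point of `E` is classified
correctly in at most `T / 2` rounds, so after `T` rounds the potential has dropped by at least
`T γ² / 2 > log (1 / ε)`, contradicting its nonnegativity.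
-/

open Finset Real

lemma sub_le_mul_log_sub_log {x y : ℝ} (hx : 0 ≤ x) (hy : 0 < y) :
    x - y ≤ x * (log x - log y) := by
  rcases hx.eq_or_lt with rfl | hx
  · simpa using hy.le
  have h := log_le_sub_one_of_pos (div_pos hy hx)
  rw [log_div hy.ne' hx.ne', le_sub_iff_add_le, le_div_iff₀ hx] at h
  nlinarith

lemma RE_eq_sum_mul_log_sub_log {n : ℕ} (p q : Fin n → ℝ) (hq : ∀ i, q i ≠ 0) :
    RE p q = ∑ i, p i * (log (p i) - log (q i)) := by
  refine sum_congr rfl fun i _ => ?_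
  split_ifs with hp
  · simp [hp]
  · rw [log_div hp (hq i)]

lemma RE_nonneg {n : ℕ} {p q : Fin n → ℝ} (hp : ∀ i, 0 ≤ p i) (hq : ∀ i, 0 < q i)
    (hsum : ∑ i, q i ≤ ∑ i, p i) : 0 ≤ RE p q := by
  rw [RE_eq_sum_mul_log_sub_log p q fun i => (hq i).ne']
  calc 0 ≤ ∑ i, (p i - q i) := by rw [sum_sub_distrib]; linarith
    _ ≤ _ := sum_le_sum fun i _ => sub_le_mul_log_sub_log (hp i) (hq i)

lemma RE_mul_div {n : ℕ} (p r w : Fin n → ℝ) (Z : ℝ) (hr : ∀ i, r i ≠ 0) (hw : ∀ i, w i ≠ 0)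
    (hZ : Z ≠ 0) :
    RE p (fun i => r i * w i / Z) = RE p r + (∑ i, p i) * log Z - ∑ i, p i * log (w i) := by
  rw [RE_eq_sum_mul_log_sub_log _ _ fun i => div_ne_zero (mul_ne_zero (hr i) (hw i)) hZ, RE_eq_sum_mul_log_sub_log _ _ hr,
    sum_mul, ← sum_add_distrib, ← sum_sub_distrib]
  refine sum_congr rfl fun i _ => ?_
  rw [log_div (mul_ne_zero (hr i) (hw i)) hZ, log_mul (hr i) (hw i)]
  ring

lemma HasDerivAt.nonneg_of_isMinOn_Icc {f : ℝ → ℝ} {f' a b : ℝ} (hf : HasDerivAt f f' a)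
    (hab : a < b) (hmin : IsMinOn f (Set.Icc a b) a) : 0 ≤ f' := by
  have hcone : (b - a) ∈ posTangentConeAt (Set.Icc a b) a :=
    mem_posTangentConeAt_of_segment_subset (by simp [segment_eq_Icc hab.le])
  have := hmin.localize.hasFDerivWithinAt_nonneg hf.hasFDerivAt.hasFDerivWithinAt hcone
  simp only [ContinuousLinearMap.toSpanSingleton_apply, smul_eq_mul] at this
  nlinarith

lemma sum_sub_mul_log_sub_log_nonneg_of_isMinOn {n : ℕ} {C : Set (Fin n → ℝ)} (hC : Convex ℝ C)
    {p₀ p q : Fin n → ℝ} (hq : ∀ i, 0 < q i) (hp₀ : ∀ i, 0 < p₀ i) (hp₀C : p₀ ∈ C) (hpC : p ∈ C)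
    (hsum : ∑ i, p i = ∑ i, p₀ i) (hmin : IsMinOn (RE · q) C p₀) :
    0 ≤ ∑ i, (p i - p₀ i) * (log (p₀ i) - log (q i)) := by
  let f : ℝ → ℝ := fun l => ∑ i, (p₀ i + l * (p i - p₀ i)) *
    (log (p₀ i + l * (p i - p₀ i)) - log (q i))
  have hf : HasDerivAt f (∑ i, ((p i - p₀ i) * (log (p₀ i) - log (q i)) + (p i - p₀ i))) 0 := by
    refine HasDerivAt.fun_sum fun i _ => ?_
    have hline : HasDerivAt (fun l => p₀ i + l * (p i - p₀ i)) (p i - p₀ i) 0 := by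
      simpa using ((hasDerivAt_id (0 : ℝ)).mul_const (p i - p₀ i)).const_add (p₀ i)
    have hlog := (hline.log (by simpa using (hp₀ i).ne')).sub_const (log (q i))
    refine (hline.fun_mul hlog).congr_deriv ?_
    rw [zero_mul, add_zero, mul_div_cancel₀ _ (hp₀ i).ne']
  have hfmin : IsMinOn f (Set.Icc 0 1) 0 := fun l hl => by
    have := hmin (hC.add_smul_sub_mem hp₀C hpC hl)
    simpa [f, RE_eq_sum_mul_log_sub_log _ q fun i => (hq i).ne'] using this
  have hd0 : ∑ i, (p i - p₀ i) = 0 := by simp [hsum]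
  simpa [sum_add_distrib, hd0] using hf.nonneg_of_isMinOn_Icc one_pos hfmin

lemma RE_add_RE_le_of_isMinOn {n : ℕ} {C : Set (Fin n → ℝ)} (hC : Convex ℝ C)
    {p₀ p q : Fin n → ℝ} (hq : ∀ i, 0 < q i) (hp₀ : ∀ i, 0 < p₀ i) (hp₀C : p₀ ∈ C) (hpC : p ∈ C)
    (hsum : ∑ i, p i = ∑ i, p₀ i) (hmin : IsMinOn (RE · q) C p₀) :
    RE p p₀ + RE p₀ q ≤ RE p q := by
  have := sum_sub_mul_log_sub_log_nonneg_of_isMinOn hC hq hp₀ hp₀C hpC hsum hmin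
  rw [RE_eq_sum_mul_log_sub_log p p₀ fun i => (hp₀ i).ne', RE_eq_sum_mul_log_sub_log p₀ q fun i => (hq i).ne',
    RE_eq_sum_mul_log_sub_log p q fun i => (hq i).ne', ← sub_nonneg, ← sum_add_distrib, ← sum_sub_distrib]
  convert this using 2 with i
  ring

def smoothDistributions (n : ℕ) (ε : ℝ) : Set (Fin n → ℝ) :=
  {p | IsDistribution p ∧ IsSmooth ε p}

lemma convex_smoothDistributions (n : ℕ) (ε : ℝ) : Convex ℝ (smoothDistributions n ε) := by
  rintro p ⟨⟨hp0, hp1⟩, hps⟩ r ⟨⟨hr0, hr1⟩, hrs⟩ a b ha hb hab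
  refine ⟨⟨fun i => ?_, ?_⟩, fun i => ?_⟩
  · simp only [Pi.add_apply, Pi.smul_apply, smul_eq_mul]
    have := hp0 i; have := hr0 i; positivity
  · simp [sum_add_distrib, ← mul_sum, hp1, hr1, hab]
  · calc (a • p + b • r) i = a * p i + b * r i := rfl
      _ ≤ a * (1 / (ε * n)) + b * (1 / (ε * n)) := by gcongr; exacts [hps i, hrs i]
      _ = 1 / (ε * n) := by rw [← add_mul, hab, one_mul]

-- The `i`-term becomes `δ log (δ / q i)`, which `hδq` bounds by minus the first-order change
-- `δ log ((p j - δ) / q j)` of the `j`-term; convexity of `x log x` leaves a net decrease `≥ δ`.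
lemma RE_add_single_sub_single_lt {n : ℕ} {p q : Fin n → ℝ} (hq : ∀ k, 0 < q k) {i j : Fin n}
    (hij : i ≠ j) (hpi : p i = 0) {δ : ℝ} (hδ : 0 < δ) (hδj : δ < p j)
    (hδq : δ * q j ≤ (p j - δ) * q i) :
    RE (p + δ • (Pi.single i 1 - Pi.single j 1)) q < RE p q := by
  have hpj : 0 < p j - δ := sub_pos.2 hδj
  have hloss : p j - (p j - δ) ≤ p j * (log (p j) - log (p j - δ)) :=
    sub_le_mul_log_sub_log (hδ.trans hδj).le hpj
  have hlog : log δ + log (q j) ≤ log (p j - δ) + log (q i) := by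
    rw [← log_mul hδ.ne' (hq j).ne', ← log_mul hpj.ne' (hq i).ne']
    exact log_le_log (mul_pos hδ (hq j)) hδq
  rw [RE_eq_sum_mul_log_sub_log _ q fun k => (hq k).ne', RE_eq_sum_mul_log_sub_log p q fun k => (hq k).ne', ← sub_neg,
    ← sum_sub_distrib, Fintype.sum_eq_add i j hij fun k hk => by simp [hk.1, hk.2]]
  simp only [Pi.add_apply, Pi.smul_apply, Pi.sub_apply, Pi.single_eq_same,
    Pi.single_eq_of_ne hij, Pi.single_eq_of_ne hij.symm, smul_eq_mul, hpi, sub_zero, zero_sub,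
    mul_one, zero_add, zero_mul, mul_neg, ← sub_eq_add_neg]
  linarith [mul_le_mul_of_nonneg_left hlog hδ.le]

lemma pos_of_isMinOn_smoothDistributions {n : ℕ} {ε : ℝ} {q p₀ : Fin n → ℝ}
    (hq : ∀ i, 0 < q i) (hp₀ : p₀ ∈ smoothDistributions n ε)
    (hmin : IsMinOn (RE · q) (smoothDistributions n ε) p₀) (i : Fin n) : 0 < p₀ i := by
  obtain ⟨⟨hnn, hsum⟩, hsmooth⟩ := hp₀
  refine (hnn i).lt_of_ne' fun hpi => ?_
  obtain ⟨j, -, hj⟩ : ∃ j ∈ univ, (0 : ℝ) < p₀ j :=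
    exists_lt_of_sum_lt (by simp [hsum])
  have hij : i ≠ j := by rintro rfl; linarith
  set δ := min (p₀ j / 2) (p₀ j * q i / (2 * q j))
  have hδ : 0 < δ := lt_min (by linarith) (div_pos (mul_pos hj (hq i)) (by linarith [hq j]))
  have hδj : δ ≤ p₀ j / 2 := min_le_left _ _
  have hδq : δ * (2 * q j) ≤ p₀ j * q i :=
    (le_div_iff₀ (by linarith [hq j])).1 (min_le_right _ _)
  have hmem : p₀ + δ • (Pi.single i 1 - Pi.single j 1 : Fin n → ℝ) ∈ smoothDistributions n ε := by
    have hval : ∀ k, (p₀ + δ • (Pi.single i 1 - Pi.single j 1 : Fin n → ℝ)) k =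
        if k = i then δ else if k = j then p₀ j - δ else p₀ k := by
      intro k
      rcases eq_or_ne k i with rfl | hki
      · simp [hpi, hij]
      rcases eq_or_ne k j with rfl | hkj
      · simp [hki, sub_eq_add_neg]
      · simp [hki, hkj]
    refine ⟨⟨fun k => ?_, ?_⟩, fun k => ?_⟩
    · rw [hval]; split_ifs <;> linarith [hnn k]
    · simp [sum_add_distrib, ← mul_sum, sum_sub_distrib, hsum]
    · rw [hval]; split_ifs <;> linarith [hsmooth k, hsmooth j]
  exact (RE_add_single_sub_single_lt hq hij hpi hδ (by linarith) (by nlinarith [hq i])).not_ge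
    (hmin hmem)

section MultiplicativeWeights

variable {n : ℕ} (γ : ℝ) (y g : Fin n → ℝ)

noncomputable def mwWeight (i : Fin n) : ℝ := if g i = y i then 1 - γ else 1

noncomputable def mwUpdate (D : Fin n → ℝ) : Fin n → ℝ :=
  fun i => D i * mwWeight γ y g i / ∑ j, D j * mwWeight γ y g j

variable {γ}

lemma mwWeight_pos (hγ : γ < 1) (i : Fin n) : 0 < mwWeight γ y g i := by
  unfold mwWeight; split_ifs <;> linarith

lemma sum_mul_mwWeight_pos (hγ : γ < 1) {D : Fin n → ℝ} (hD : ∀ i, 0 < D i) (hn : 0 < n) :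
    0 < ∑ j, D j * mwWeight γ y g j :=
  sum_pos (fun j _ => mul_pos (hD j) (mwWeight_pos y g hγ j)) ⟨⟨0, hn⟩, mem_univ _⟩

lemma sum_mul_mwWeight {D : Fin n → ℝ} (hD : ∑ i, D i = 1) :
    ∑ j, D j * mwWeight γ y g j = 1 - γ * ∑ j ∈ univ.filter (fun j => g j = y j), D j := by
  rw [sum_filter, mul_sum, ← hD, ← sum_sub_distrib]
  refine sum_congr rfl fun j _ => ?_
  unfold mwWeight; split_ifs <;> ring

lemma mwUpdate_pos (hγ : γ < 1) {D : Fin n → ℝ} (hD : ∀ i, 0 < D i) (i : Fin n) :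
    0 < mwUpdate γ y g D i :=
  div_pos (mul_pos (hD i) (mwWeight_pos y g hγ i))
    (sum_mul_mwWeight_pos y g hγ hD (Fin.pos i))

lemma sum_mwUpdate (hγ : γ < 1) {D : Fin n → ℝ} (hD : ∀ i, 0 < D i) (hn : 0 < n) :
    ∑ i, mwUpdate γ y g D i = 1 := by
  unfold mwUpdate
  rw [← sum_div, div_self (sum_mul_mwWeight_pos y g hγ hD hn).ne']

lemma RE_mwUpdate_le (hγ : 0 ≤ γ) (hγ1 : γ < 1) {D P : Fin n → ℝ} (hD : ∀ i, 0 < D i)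
    (hD1 : ∑ i, D i = 1) (hweak : 1 / 2 + γ ≤ ∑ i ∈ univ.filter (fun i => g i = y i), D i)
    (hP : ∑ i, P i = 1) :
    RE P (mwUpdate γ y g D) ≤ RE P D + (log (1 - γ * (1 / 2 + γ))
      - log (1 - γ) * ∑ i ∈ univ.filter (fun i => g i = y i), P i) := by
  have hn : 0 < n := Nat.pos_of_ne_zero <| by rintro rfl; simp at hD1
  have hZ := sum_mul_mwWeight_pos y g hγ1 hD hn
  have hlogw : ∑ i, P i * log (mwWeight γ y g i) =
      log (1 - γ) * ∑ i ∈ univ.filter (fun i => g i = y i), P i := by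
    rw [sum_filter, mul_sum]
    refine sum_congr rfl fun i _ => ?_
    unfold mwWeight; split_ifs <;> simp [mul_comm]
  have hlogZ : log (∑ j, D j * mwWeight γ y g j) ≤ log (1 - γ * (1 / 2 + γ)) :=
    log_le_log hZ (by rw [sum_mul_mwWeight y g hD1]; nlinarith)
  unfold mwUpdate
  rw [RE_mul_div P D _ _ (fun i => (hD i).ne') (fun i => (mwWeight_pos y g hγ1 i).ne')
    hZ.ne', hP, one_mul, hlogw]
  linarith

end MultiplicativeWeights

noncomputable def uniformOn {n : ℕ} (S : Finset (Fin n)) : Fin n → ℝ :=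
  fun i => if i ∈ S then (#S : ℝ)⁻¹ else 0

lemma isDistribution_uniformOn {n : ℕ} {S : Finset (Fin n)} (hS : S.Nonempty) :
    IsDistribution (uniformOn S) := by
  refine ⟨fun i => ?_, ?_⟩
  · unfold uniformOn; split_ifs <;> positivity
  · simp [uniformOn, hS.ne_empty]

lemma isSmooth_uniformOn {n : ℕ} {ε : ℝ} (hε : 0 < ε) {S : Finset (Fin n)} (hS : ε * n ≤ #S) :
    IsSmooth ε (uniformOn S) := fun i => by
  have hεn : 0 < ε * n := mul_pos hε (Nat.cast_pos.2 (Fin.pos i))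
  unfold uniformOn
  split_ifs
  · rw [one_div]; exact inv_anti₀ hεn hS
  · positivity

lemma RE_uniformOn_uniform {n : ℕ} {S : Finset (Fin n)} (hS : S.Nonempty) :
    RE (uniformOn S) (fun _ => 1 / n) = log (n / #S) := by
  have hn : (n : ℝ) ≠ 0 := Nat.cast_ne_zero.2 (Fin.pos hS.choose).ne'
  have hSc : (#S : ℝ) ≠ 0 := Nat.cast_ne_zero.2 hS.card_pos.ne'
  rw [RE_eq_sum_mul_log_sub_log _ _ fun _ => by simpa using hn,
    ← sum_subset (subset_univ S) fun i _ hi => by simp [uniformOn, hi]]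
  rw [sum_congr rfl fun i hi => by rw [uniformOn, if_pos hi], sum_const, nsmul_eq_mul,
    ← mul_assoc, mul_inv_cancel₀ hSc, one_mul, log_div hn hSc, log_inv, one_div, log_inv]
  ring

lemma mul_sum_eq_two_mul_card_sub {a : ℝ} {b : ℕ → ℝ} {T : ℕ} (ha : a = -1 ∨ a = 1)
    (hb : ∀ t < T, b t = -1 ∨ b t = 1) :
    a * ∑ t ∈ range T, b t = 2 * #{t ∈ range T | b t = a} - T := by
  have hterm : ∀ t ∈ range T, a * b t = 2 * (if b t = a then 1 else 0) - 1 := fun t ht => by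
    rcases ha with rfl | rfl <;> rcases hb t (mem_range.1 ht) with h | h <;> norm_num [h]
  rw [mul_sum, sum_congr rfl hterm, sum_sub_distrib, ← mul_sum, sum_boole, sum_const, card_range,
    nsmul_eq_mul, mul_one]

lemma sum_sum_filter_le_of_card_le {n T : ℕ} {P : Fin n → ℝ} (hP : IsDistribution P)
    (A : ℕ → Fin n → Prop) [∀ t i, Decidable (A t i)] {c : ℝ}
    (hc : ∀ i, P i ≠ 0 → #{t ∈ range T | A t i} ≤ c) :
    ∑ t ∈ range T, ∑ i ∈ univ.filter (A t), P i ≤ c := by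
  calc ∑ t ∈ range T, ∑ i ∈ univ.filter (A t), P i
      = ∑ i, #{t ∈ range T | A t i} * P i := by
        simp only [sum_filter]
        rw [sum_comm]
        refine sum_congr rfl fun i _ => ?_
        rw [← sum_filter, sum_const, nsmul_eq_mul]
    _ ≤ ∑ i, c * P i := sum_le_sum fun i _ => by
        rcases eq_or_ne (P i) 0 with h | h
        · simp [h]
        · exact mul_le_mul_of_nonneg_right (hc i h) (hP.1 i)
    _ = c := by rw [← mul_sum, hP.2, mul_one]

lemma log_one_sub_mul_sub_half_log_le {γ : ℝ} (hγ : 0 ≤ γ) (hγ' : γ ≤ 1 / 2) :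
    log (1 - γ * (1 / 2 + γ)) - log (1 - γ) / 2 ≤ -γ ^ 2 / 2 := by
  have h1γ : 0 < 1 - γ := by linarith
  have hsq : (1 - γ * (1 / 2 + γ)) ^ 2 ≤ (1 - γ) * exp (-γ ^ 2) := by
    have hexp := mul_le_mul_of_nonneg_left (add_one_le_exp (-γ ^ 2)) h1γ.le
    nlinarith [mul_nonneg (sq_nonneg γ) (show 0 ≤ 3 / 4 - γ ^ 2 by nlinarith)]
  have := log_le_log (by nlinarith) hsq
  rw [log_pow, log_mul h1γ.ne' (exp_pos _).ne', log_exp] at this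
  push_cast at this
  linarith

lemma nonneg_add_sum_of_chain {Φ Ψ δ : ℕ → ℝ} {T : ℕ} (hT : 0 < T) (hΨ : ∀ t < T, 0 ≤ Ψ t)
    (hstep : ∀ t < T, Ψ t ≤ Φ t + δ t) (hnext : ∀ t, t + 1 < T → Φ (t + 1) ≤ Ψ t) :
    0 ≤ Φ 0 + ∑ t ∈ range T, δ t := by
  have hchain : ∀ t < T, Φ t ≤ Φ 0 + ∑ s ∈ range t, δ s := by
    intro t ht
    induction t with
    | zero => simp
    | succ t ih =>
      rw [sum_range_succ]
      linarith [hnext t ht, hstep t (by omega), ih (by omega)]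
  obtain ⟨t, rfl⟩ := Nat.exists_eq_add_of_lt hT
  rw [zero_add, sum_range_succ]
  linarith [hΨ t (by omega), hstep t (by omega), hchain t (by omega)]

section Boosting

variable {n T : ℕ} {ε γ : ℝ} {y : Fin n → ℝ} {h : ℕ → Fin n → ℝ} {D : ℕ → Fin n → ℝ}

lemma smoothBoosting_potential (hγ : 0 ≤ γ) (hγ1 : γ < 1) (hT : 0 < T)
    (hD0 : ∀ i, 0 < D 0 i) (hD : ∀ t < T, D t ∈ smoothDistributions n ε)
    (hweak : ∀ t < T, 1 / 2 + γ ≤ ∑ i ∈ univ.filter (fun i => h t i = y i), D t i)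
    (hproj : ∀ t, t + 1 < T →
      IsMinOn (RE · (mwUpdate γ y (h t) (D t))) (smoothDistributions n ε) (D (t + 1)))
    {P : Fin n → ℝ} (hP : P ∈ smoothDistributions n ε) :
    0 ≤ RE P (D 0) + ∑ t ∈ range T, (log (1 - γ * (1 / 2 + γ))
      - log (1 - γ) * ∑ i ∈ univ.filter (fun i => h t i = y i), P i) := by
  have hn : 0 < n := Nat.pos_of_ne_zero <| by rintro rfl; simpa using (hD 0 hT).1.2
  have hpos : ∀ t < T, ∀ i, 0 < D t i := by
    intro t ht
    induction t with
    | zero => exact hD0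
    | succ t ih =>
      exact pos_of_isMinOn_smoothDistributions (mwUpdate_pos y (h t) hγ1 (ih (by omega)))
        (hD _ ht) (hproj t ht)
  have hupd_pos : ∀ t < T, ∀ i, 0 < mwUpdate γ y (h t) (D t) i :=
    fun t ht => mwUpdate_pos y (h t) hγ1 (hpos t ht)
  have hupd_sum : ∀ t < T, ∑ i, mwUpdate γ y (h t) (D t) i = 1 :=
    fun t ht => sum_mwUpdate y (h t) hγ1 (hpos t ht) hn
  refine nonneg_add_sum_of_chain hT (Φ := fun t => RE P (D t))
    (Ψ := fun t => RE P (mwUpdate γ y (h t) (D t))) (fun t ht => ?_) (fun t ht => ?_)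
    (fun t ht => ?_)
  · exact RE_nonneg hP.1.1 (hupd_pos t ht) (by rw [hupd_sum t ht, hP.1.2])
  · exact RE_mwUpdate_le y (h t) hγ hγ1 (hpos t ht) (hD t ht).1.2 (hweak t ht) hP.1.2
  · have hpyth := RE_add_RE_le_of_isMinOn (convex_smoothDistributions n ε)
      (hupd_pos t (by omega)) (hpos _ ht) (hD _ ht) hP (by rw [hP.1.2, (hD _ ht).1.2])
      (hproj t ht)
    have hRE_nonneg := RE_nonneg (hD _ ht).1.1 (hupd_pos t (by omega))
      (by rw [hupd_sum t (by omega), (hD _ ht).1.2])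
    linarith

lemma smoothBoosting_mul_sq_div_two_le_RE (hγ : 0 ≤ γ) (hγhalf : γ ≤ 1 / 2) (hT : 0 < T)
    (hD0 : ∀ i, 0 < D 0 i) (hD : ∀ t < T, D t ∈ smoothDistributions n ε)
    (hweak : ∀ t < T, 1 / 2 + γ ≤ ∑ i ∈ univ.filter (fun i => h t i = y i), D t i)
    (hproj : ∀ t, t + 1 < T →
      IsMinOn (RE · (mwUpdate γ y (h t) (D t))) (smoothDistributions n ε) (D (t + 1)))
    {P : Fin n → ℝ} (hP : P ∈ smoothDistributions n ε)
    (hP_wrong : ∀ i, P i ≠ 0 → (#{t ∈ range T | h t i = y i} : ℝ) ≤ T / 2) :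
    T * γ ^ 2 / 2 ≤ RE P (D 0) := by
  have hpot := smoothBoosting_potential hγ (by linarith) hT hD0 hD hweak hproj hP
  rw [sum_sub_distrib, sum_const, card_range, nsmul_eq_mul, ← mul_sum] at hpot
  have hcorrect := sum_sum_filter_le_of_card_le hP.1 (fun t i => h t i = y i) hP_wrong
  have hlog : log (1 - γ) ≤ 0 := log_nonpos (by linarith) (by linarith)
  nlinarith [mul_le_mul_of_nonneg_left hcorrect (neg_nonneg.2 hlog),
    mul_le_mul_of_nonneg_left (log_one_sub_mul_sub_half_log_le hγ hγhalf) (Nat.cast_nonneg T)]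

end Boosting

/-- Theorem 1: correctness of the centralized smooth boosting algorithm. -/
theorem smooth_boosting_realizable
    (n : ℕ) (hn : 1 ≤ n) (ε γ : ℝ) (hε : 0 < ε) (hε1 : ε ≤ 1)
    (hγ : 0 < γ) (hγhalf : γ ≤ 1 / 2)
    (y : Fin n → ℝ) (hy : ∀ i, y i = -1 ∨ y i = 1)
    (T : ℕ) (hT : (T : ℝ) > 2 * Real.log (1 / ε) / γ ^ 2)
    (h : ℕ → Fin n → ℝ) (hh : ∀ t < T, ∀ i, h t i = -1 ∨ h t i = 1)
    (D : ℕ → Fin n → ℝ)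
    (hDdist : ∀ t < T, IsDistribution (D t))
    -- (i) the first distribution is uniform
    (hD0 : ∀ i, D 0 i = 1 / n)
    -- (ii) each distribution is ε-smooth
    (hDsmooth : ∀ t < T, IsSmooth ε (D t))
    -- (iii) weak learning: each hypothesis is correct with weight at least 1/2 + γ
    (hweak : ∀ t < T,
      (1 / 2 + γ) ≤ ∑ i ∈ Finset.univ.filter (fun i => h t i = y i), D t i)
    -- (iv) multiplicative update followed by relative-entropy projection onto
    -- the set of ε-smooth distributions
    (hupdate : ∀ t, t + 1 < T →
      ∀ Dp : Fin n → ℝ, IsDistribution Dp → IsSmooth ε Dp →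
        RE (D (t + 1))
            (fun i => D t i * (if h t i = y i then 1 - γ else 1) /
              (∑ j, D t j * (if h t j = y j then 1 - γ else 1))) ≤
          RE Dp
            (fun i => D t i * (if h t i = y i then 1 - γ else 1) /
              (∑ j, D t j * (if h t j = y j then 1 - γ else 1)))) :
    ((Finset.univ.filter
        (fun i : Fin n => y i * ∑ t ∈ Finset.range T, h t i ≤ 0)).card : ℝ) <
      ε * n := by
  by_contra! hErr_card
  set Err := univ.filter (fun i : Fin n => y i * ∑ t ∈ range T, h t i ≤ 0)
  have hn' : (0 : ℝ) < n := by exact_mod_cast hn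
  have hErr : Err.Nonempty := card_pos.1 (by exact_mod_cast (mul_pos hε hn').trans_le hErr_card)
  have hlog : 0 ≤ log (1 / ε) := log_nonneg (by rw [le_div_iff₀ hε]; linarith)
  have hT0 : 0 < T := by exact_mod_cast (div_nonneg (by linarith) (sq_nonneg γ)).trans_lt hT
  have hbound := smoothBoosting_mul_sq_div_two_le_RE (P := uniformOn Err) hγ.le hγhalf hT0
    (fun i => by rw [hD0]; positivity) (fun t ht => ⟨hDdist t ht, hDsmooth t ht⟩) hweak
    (fun t ht => isMinOn_iff.2 fun p hp => hupdate t ht p hp.1 hp.2)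
    ⟨isDistribution_uniformOn hErr, isSmooth_uniformOn hε hErr_card⟩ fun i hi => by
      have hi : i ∈ Err := by by_contra hi'; simp [uniformOn, hi'] at hi
      linarith [(mem_filter.1 hi).2, mul_sum_eq_two_mul_card_sub (hy i) fun t ht => hh t ht i]
  have hinit : RE (uniformOn Err) (D 0) ≤ log (1 / ε) := by
    rw [show D 0 = fun _ => (1 : ℝ) / n from funext hD0, RE_uniformOn_uniform hErr]
    exact log_le_log (by positivity) (by rw [div_le_div_iff₀ (by positivity) hε]; linarith)
  rw [gt_iff_lt, div_lt_iff₀ (by positivity)] at hT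
  linarith
end

section
/- Let n ≥ 1 and γ ∈ (0,1/2]. Let ℓ : Fin n → ℝ with 0 ≤ ℓ(i) ≤ 1 for all i, let D' be a distribution on Fin n with all coordinates strictly positive, let Z = ∑_j D'(j)·(1−γ)^{ℓ(j)}, and define the distribution D̂ by D̂(i) = D'(i)·(1−γ)^{ℓ(i)}/Z. Then for every distribution D on Fin n: γ·∑_i ℓ(i)·D'(i) ≤ (γ + γ²)·∑_i ℓ(i)·D(i) + RE(D ‖ D') − RE(D ‖ D̂). -/
lemma log_one_sub_ge (γ : ℝ) (hγ : 0 < γ) (hγhalf : γ ≤ 1 / 2) :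
    -γ - γ ^ 2 ≤ Real.log (1 - γ) := by
  have habs : |γ| < 1 := by rw [abs_of_pos hγ]; linarith
  have h := Real.abs_log_sub_add_sum_range_le habs 4
  rw [abs_of_pos hγ] at h
  have hsum : (∑ i ∈ Finset.range 4, γ ^ (i + 1) / (i + 1))
      = γ + γ ^ 2 / 2 + γ ^ 3 / 3 + γ ^ 4 / 4 := by
    simp [Finset.sum_range_succ]
    ring
  rw [hsum] at h
  have h1 : γ + γ ^ 2 / 2 + γ ^ 3 / 3 + γ ^ 4 / 4 + Real.log (1 - γ)
      ≥ -(γ ^ 5 / (1 - γ)) := by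
    have := neg_abs_le (γ + γ ^ 2 / 2 + γ ^ 3 / 3 + γ ^ 4 / 4 + Real.log (1 - γ))
    linarith
  have hg1 : (0:ℝ) < 1 - γ := by linarith
  have h2 : γ ^ 5 / (1 - γ) ≤ 2 * γ ^ 5 := by
    rw [div_le_iff₀ hg1]
    nlinarith [pow_pos hγ 5]
  nlinarith [pow_pos hγ 3, pow_pos hγ 2, sq_nonneg γ, pow_pos hγ 5, sq_nonneg (γ^2)]

/-- Per-round progress inequality for the multiplicative weights update rule
`D̂(i) ∝ D'(i)·(1-γ)^{ℓ(i)}`. -/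
theorem mwu_per_round_progress
    (n : ℕ) (hn : 1 ≤ n) (γ : ℝ) (hγ : 0 < γ) (hγhalf : γ ≤ 1 / 2)
    (ℓ : Fin n → ℝ) (hℓ : ∀ i, 0 ≤ ℓ i ∧ ℓ i ≤ 1)
    (D' : Fin n → ℝ) (hD' : IsDistribution D') (hpos : ∀ i, 0 < D' i)
    (Z : ℝ) (hZ : Z = ∑ j, D' j * (1 - γ) ^ (ℓ j))
    (Dhat : Fin n → ℝ) (hDhat : ∀ i, Dhat i = D' i * (1 - γ) ^ (ℓ i) / Z)
    (D : Fin n → ℝ) (hD : IsDistribution D) :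
    γ * ∑ i, ℓ i * D' i ≤
      (γ + γ ^ 2) * ∑ i, ℓ i * D i + RE D D' - RE D Dhat := by
  have hg1 : (0:ℝ) < 1 - γ := by linarith
  have hrpos : ∀ i : Fin n, 0 < (1 - γ) ^ (ℓ i) := fun i => Real.rpow_pos_of_pos hg1 _
  have hZpos : 0 < Z := by
    rw [hZ]
    apply Finset.sum_pos
    · intro i _; exact mul_pos (hpos i) (hrpos i)
    · haveI : Nonempty (Fin n) := Fin.pos_iff_nonempty.mp hn
      exact Finset.univ_nonempty
  -- Z ≤ 1 - γ * S'
  set S' := ∑ i, ℓ i * D' i with hS'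
  set SD := ∑ i, ℓ i * D i with hSD
  have hZle : Z ≤ 1 - γ * S' := by
    have hterm : ∀ i : Fin n, D' i * (1 - γ) ^ (ℓ i) ≤ D' i * (1 - γ * ℓ i) := by
      intro i
      apply mul_le_mul_of_nonneg_left _ (hpos i).le
      have := rpow_one_add_le_one_add_mul_self (s := -γ) (by linarith) (hℓ i).1 (hℓ i).2
      calc (1 - γ) ^ (ℓ i) = (1 + -γ) ^ (ℓ i) := by ring_nf
        _ ≤ 1 + ℓ i * -γ := this
        _ = 1 - γ * ℓ i := by ring
    calc Z ≤ ∑ i, D' i * (1 - γ * ℓ i) := by rw [hZ]; exact Finset.sum_le_sum fun i _ => hterm i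
      _ = (∑ i, D' i) - γ * ∑ i, ℓ i * D' i := by
          rw [Finset.mul_sum, ← Finset.sum_sub_distrib]; apply Finset.sum_congr rfl; intros; ring
      _ = 1 - γ * S' := by rw [hD'.2]
  have hlogZ : Real.log Z ≤ -(γ * S') := by
    calc Real.log Z ≤ Real.log (1 - γ * S') := Real.log_le_log hZpos hZle
      _ ≤ (1 - γ * S') - 1 := Real.log_le_sub_one_of_pos (lt_of_lt_of_le hZpos hZle)
      _ = -(γ * S') := by ring
  -- RE difference
  have hREdiff : RE D D' - RE D Dhat = Real.log (1 - γ) * SD - Real.log Z := by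
    unfold RE
    rw [← Finset.sum_sub_distrib]
    have : ∀ i : Fin n, ((if D i = 0 then 0 else D i * Real.log (D i / D' i)) -
        (if D i = 0 then 0 else D i * Real.log (D i / Dhat i)))
        = Real.log (1 - γ) * (ℓ i * D i) - Real.log Z * D i := by
      intro i
      by_cases h0 : D i = 0
      · simp [h0]
      · have hDi : 0 < D i := lt_of_le_of_ne (hD.1 i) (Ne.symm h0)
        have hDhi : 0 < Dhat i := by
          rw [hDhat i]; exact div_pos (mul_pos (hpos i) (hrpos i)) hZpos
        rw [if_neg h0, if_neg h0, ← mul_sub,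
          Real.log_div h0 (ne_of_gt (hpos i)), Real.log_div h0 (ne_of_gt hDhi),
          hDhat i, Real.log_div (mul_pos (hpos i) (hrpos i)).ne' (ne_of_gt hZpos),
          Real.log_mul (ne_of_gt (hpos i)) (ne_of_gt (hrpos i)),
          Real.log_rpow hg1]
        ring
      
    rw [Finset.sum_congr rfl (fun i _ => this i), Finset.sum_sub_distrib,
      ← Finset.mul_sum, ← Finset.mul_sum, hD.2]
    ring
  have hlog1g := log_one_sub_ge γ hγ hγhalf
  have hSDnn : 0 ≤ SD := Finset.sum_nonneg fun i _ => mul_nonneg (hℓ i).1 (hD.1 i)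
  have key : 0 ≤ ((γ + γ ^ 2) + Real.log (1 - γ)) * SD :=
    mul_nonneg (by linarith) hSDnn
  rw [add_mul] at key
  linarith
end

section
/- Let n ≥ 1, let P be a convex set of distributions on Fin n, let q be a distribution on Fin n with all coordinates strictly positive, and suppose p* ∈ P has all coordinates strictly positive and minimizes relative entropy to q over P, i.e., RE(p* ‖ q) ≤ RE(p ‖ q) for all p ∈ P. Then for every p ∈ P: RE(p ‖ p*) + RE(p* ‖ q) ≤ RE(p ‖ q). -/
/-- Generalized Pythagorean inequality for the relative-entropy (Bregman)
projection onto a convex set of distributions. -/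
theorem bregman_projection_pythagorean
    (n : ℕ) (hn : 1 ≤ n) (P : Set (Fin n → ℝ))
    (hPdist : ∀ p ∈ P, IsDistribution p)
    (hPconv : ∀ p ∈ P, ∀ p' ∈ P, ∀ lam : ℝ, 0 ≤ lam → lam ≤ 1 →
      (fun i => lam * p i + (1 - lam) * p' i) ∈ P)
    (q : Fin n → ℝ) (hq : IsDistribution q) (hqpos : ∀ i, 0 < q i)
    (pstar : Fin n → ℝ) (hpstarP : pstar ∈ P) (hpstarpos : ∀ i, 0 < pstar i)
    (hmin : ∀ p ∈ P, RE pstar q ≤ RE p q)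
    (p : Fin n → ℝ) (hp : p ∈ P) :
    RE p pstar + RE pstar q ≤ RE p q := by
  obtain ⟨hp0, hp1⟩ := hPdist p hp
  obtain ⟨hps0, hps1⟩ := hPdist pstar hpstarP
  set S : ℝ := ∑ i, (p i - pstar i) * Real.log (pstar i / q i) with hS
  set C : ℝ := ∑ i, (p i - pstar i) ^ 2 / pstar i with hC
  have hC0 : 0 ≤ C :=
    Finset.sum_nonneg fun i _ => div_nonneg (sq_nonneg _) (hpstarpos i).le
  have hsumdiff : ∑ i, (p i - pstar i) = 0 := by
    rw [Finset.sum_sub_distrib, hp1, hps1]; ring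
  have hREps : RE pstar q = ∑ i, pstar i * Real.log (pstar i / q i) := by
    unfold RE
    exact Finset.sum_congr rfl fun i _ => if_neg (hpstarpos i).ne'
  have key : ∀ lam : ℝ, 0 < lam → lam < 1 → -(lam * C) ≤ S := by
    intro lam hl0 hl1
    set pl : Fin n → ℝ := fun i => lam * p i + (1 - lam) * pstar i with hpl
    have hplP : pl ∈ P := hPconv p hp pstar hpstarP lam hl0.le hl1.le
    have hplpos : ∀ i, 0 < pl i := fun i =>
      add_pos_of_nonneg_of_pos (mul_nonneg hl0.le (hp0 i))
        (mul_pos (by linarith) (hpstarpos i))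
    have hpl1 : ∑ i, pl i = 1 := by
      simp only [hpl]
      rw [Finset.sum_add_distrib, ← Finset.mul_sum, ← Finset.mul_sum, hp1, hps1]
      ring
    have hmin' := hmin pl hplP
    have hREpl : RE pl q = ∑ i, pl i * Real.log (pl i / q i) := by
      unfold RE
      exact Finset.sum_congr rfl fun i _ => if_neg (hplpos i).ne'
    have hdiff : RE pl q - RE pstar q
        = (∑ i, pl i * Real.log (pl i / pstar i)) + lam * S := by
      rw [hREpl, hREps, hS, Finset.mul_sum, ← Finset.sum_add_distrib,
        ← Finset.sum_sub_distrib]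
      refine Finset.sum_congr rfl fun i _ => ?_
      have hlog : Real.log (pl i / q i)
          = Real.log (pl i / pstar i) + Real.log (pstar i / q i) := by
        rw [Real.log_div (hplpos i).ne' (hqpos i).ne',
          Real.log_div (hplpos i).ne' (hpstarpos i).ne',
          Real.log_div (hpstarpos i).ne' (hqpos i).ne']
        ring
      rw [hlog]
      simp only [hpl]
      ring
    have hbound : (∑ i, pl i * Real.log (pl i / pstar i)) ≤ lam ^ 2 * C := by
      have step1 : (∑ i, pl i * Real.log (pl i / pstar i))
          ≤ ∑ i, (pl i ^ 2 / pstar i - pl i) := by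
        refine Finset.sum_le_sum fun i _ => ?_
        have h1 : Real.log (pl i / pstar i) ≤ pl i / pstar i - 1 :=
          Real.log_le_sub_one_of_pos (div_pos (hplpos i) (hpstarpos i))
        have h2 : pl i * (pl i / pstar i - 1) = pl i ^ 2 / pstar i - pl i := by
          rw [mul_sub, mul_one, sq, mul_div_assoc]
        calc pl i * Real.log (pl i / pstar i)
            ≤ pl i * (pl i / pstar i - 1) :=
              mul_le_mul_of_nonneg_left h1 (hplpos i).le
          _ = pl i ^ 2 / pstar i - pl i := h2
      have step2 : (∑ i, (pl i ^ 2 / pstar i - pl i)) = lam ^ 2 * C := by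
        have hterm : ∀ i : Fin n, pl i ^ 2 / pstar i
            = pstar i + 2 * lam * (p i - pstar i)
              + lam ^ 2 * ((p i - pstar i) ^ 2 / pstar i) := by
          intro i
          have hne := (hpstarpos i).ne'
          simp only [hpl]
          field_simp
          ring
        rw [Finset.sum_sub_distrib, hpl1]
        rw [Finset.sum_congr rfl fun i _ => hterm i]
        rw [Finset.sum_add_distrib, Finset.sum_add_distrib, hps1,
          ← Finset.mul_sum, ← Finset.mul_sum, hsumdiff, hC]
        ring
      linarith [step1, step2.le, step2.ge]
    have hpos : 0 ≤ lam ^ 2 * C + lam * S := by linarith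
    nlinarith [hpos, hl0]
  have hS0 : 0 ≤ S := by
    by_contra hneg
    push_neg at hneg
    set lam : ℝ := min (1 / 2) (-S / (C + 1)) with hlam
    have hl0 : 0 < lam := by
      apply lt_min (by norm_num)
      apply div_pos (by linarith) (by linarith)
    have hl1 : lam < 1 := lt_of_le_of_lt (min_le_left _ _) (by norm_num)
    have hkey := key lam hl0 hl1
    have h1 : lam ≤ -S / (C + 1) := min_le_right _ _
    have h2 : lam * C ≤ (-S / (C + 1)) * C := mul_le_mul_of_nonneg_right h1 hC0
    have h3 : (-S / (C + 1)) * C < -S := by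
      rw [div_mul_eq_mul_div, div_lt_iff₀ (by linarith : (0:ℝ) < C + 1)]
      nlinarith
    linarith
  have hfinal : RE p q - RE p pstar - RE pstar q = S := by
    unfold RE
    rw [hS, ← Finset.sum_sub_distrib, ← Finset.sum_sub_distrib]
    refine Finset.sum_congr rfl fun i _ => ?_
    rw [if_neg (hpstarpos i).ne']
    by_cases hpi : p i = 0
    · simp [hpi]
    · rw [if_neg hpi, if_neg hpi]
      have ppos : 0 < p i := (hp0 i).lt_of_ne (Ne.symm hpi)
      have hlog : Real.log (p i / q i)
          = Real.log (p i / pstar i) + Real.log (pstar i / q i) := by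
        rw [Real.log_div ppos.ne' (hqpos i).ne',
          Real.log_div ppos.ne' (hpstarpos i).ne',
          Real.log_div (hpstarpos i).ne' (hqpos i).ne']
        ring
      rw [hlog]
      ring
  linarith
end

section
/- Let n ≥ 1, let ε ∈ (0,1) with ε·n > 1, and set c = 1/(ε·n). Let q be a distribution on Fin n with all coordinates strictly positive, sorted in decreasing order (q(i) ≥ q(j) whenever i ≤ j), and assume q is not ε-smooth. For a natural number m with m·c ≤ 1 and ∑_{j ≥ m} q(j) > 0, define the vector p^(m) by p^(m)(i) = c for i < m and p^(m)(i) = q(i)·(1 − m·c)/(∑_{j ≥ m} q(j)) for i ≥ m. Then: (a) there exists m with 1 ≤ m < n, m·c ≤ 1, ∑_{j ≥ m} q(j) > 0, such that p^(m) is an ε-smooth distribution; and (b) for the least such m, the distribution p^(m) is the relative-entropy projection of q onto the ε-smooth distributions, i.e., RE(p^(m) ‖ q) ≤ RE(p ‖ q) for every ε-smooth distribution p on Fin n. -/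
/-- The rest-sum `∑_{j ≥ m} q j`. -/
def restSum {n : ℕ} (q : Fin n → ℝ) (m : ℕ) : ℝ :=
  ∑ j ∈ Finset.univ.filter (fun j : Fin n => m ≤ (j : ℕ)), q j

/-- The capped vector `p^(m)`: the first `m` coordinates are clipped to `c`,
and the remaining ones are rescaled to total `1 - m·c`. -/
noncomputable def capped {n : ℕ} (q : Fin n → ℝ) (c : ℝ) (m : ℕ) : Fin n → ℝ :=
  fun i => if (i : ℕ) < m then c else q i * (1 - m * c) / restSum q m

set_option maxHeartbeats 1000000

lemma card_filter_lt' (n m : ℕ) (h : m ≤ n) :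
    (Finset.univ.filter (fun i : Fin n => (i:ℕ) < m)).card = m := by
  have : (Finset.univ.filter (fun i : Fin n => (i:ℕ) < m))
      = Finset.map (Fin.castLEEmb h) Finset.univ := by
    ext j
    simp only [Finset.mem_filter, Finset.mem_univ, true_and, Finset.mem_map]
    constructor
    · intro hj
      exact ⟨⟨j, hj⟩, rfl⟩
    · rintro ⟨i, rfl⟩
      exact i.2
  rw [this, Finset.card_map, Finset.card_univ, Fintype.card_fin]

lemma filter_not_lt (n m : ℕ) :
    (Finset.univ.filter (fun i : Fin n => ¬ (i:ℕ) < m))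
      = Finset.univ.filter (fun i : Fin n => m ≤ (i:ℕ)) := by
  ext i; simp [not_lt]

/-- splitting any sum at m -/
lemma sum_split {n m : ℕ} (f : Fin n → ℝ) :
    ∑ i, f i = (∑ i ∈ Finset.univ.filter (fun i : Fin n => (i:ℕ) < m), f i)
      + ∑ i ∈ Finset.univ.filter (fun i : Fin n => m ≤ (i:ℕ)), f i := by
  rw [← filter_not_lt n m, Finset.sum_filter_add_sum_filter_not]

lemma sum_A_capped {n : ℕ} (q : Fin n → ℝ) (c : ℝ) (m : ℕ) (hm : m ≤ n) :
    ∑ i ∈ Finset.univ.filter (fun i : Fin n => (i:ℕ) < m), capped q c m i = m * c := by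
  have : ∀ i ∈ Finset.univ.filter (fun i : Fin n => (i:ℕ) < m), capped q c m i = c := by
    intro i hi
    simp only [Finset.mem_filter] at hi
    simp [capped, hi.2]
  rw [Finset.sum_congr rfl this, Finset.sum_const, card_filter_lt' n m hm, nsmul_eq_mul]

lemma sum_B_capped {n : ℕ} (q : Fin n → ℝ) (c : ℝ) (m : ℕ) (hR : restSum q m ≠ 0) :
    ∑ i ∈ Finset.univ.filter (fun i : Fin n => m ≤ (i:ℕ)), capped q c m i = 1 - m * c := by
  have : ∀ i ∈ Finset.univ.filter (fun i : Fin n => m ≤ (i:ℕ)),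
      capped q c m i = q i * ((1 - m * c) / restSum q m) := by
    intro i hi
    simp only [Finset.mem_filter] at hi
    simp [capped, not_lt.mpr hi.2, mul_div_assoc]
  rw [Finset.sum_congr rfl this, ← Finset.sum_mul]
  show restSum q m * ((1 - m * c) / restSum q m) = 1 - m * c
  field_simp

lemma sum_capped_eq_one {n : ℕ} (q : Fin n → ℝ) (c : ℝ) (m : ℕ) (hm : m ≤ n)
    (hR : restSum q m ≠ 0) : ∑ i, capped q c m i = 1 := by
  rw [sum_split (m := m), sum_A_capped q c m hm, sum_B_capped q c m hR]; ring

lemma restSum_pos {n m : ℕ} (q : Fin n → ℝ) (hqpos : ∀ i, 0 < q i) (hm : m < n) :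
    0 < restSum q m := by
  apply Finset.sum_pos (fun i _ => hqpos i)
  exact ⟨⟨m, hm⟩, by simp⟩

lemma restSum_succ {n : ℕ} (q : Fin n → ℝ) (k : ℕ) (hk : k < n) :
    restSum q k = q ⟨k, hk⟩ + restSum q (k + 1) := by
  unfold restSum
  have : (Finset.univ.filter (fun j : Fin n => k ≤ (j : ℕ)))
      = insert ⟨k, hk⟩ (Finset.univ.filter (fun j : Fin n => k + 1 ≤ (j : ℕ))) := by
    ext j
    simp only [Finset.mem_filter, Finset.mem_univ, true_and, Finset.mem_insert]
    constructor
    · intro hj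
      rcases eq_or_lt_of_le hj with h | h
      · left; exact (Fin.ext h.symm)
      · right; exact h
    · rintro (rfl | hj)
      · exact le_refl _
      · omega
  rw [this, Finset.sum_insert (by simp)]

lemma single_le_restSum {n m : ℕ} (q : Fin n → ℝ) (hqpos : ∀ i, 0 < q i) (i : Fin n)
    (hi : m ≤ (i : ℕ)) : q i ≤ restSum q m :=
  Finset.single_le_sum (fun j _ => (hqpos j).le) (by simp [hi])

lemma gibbs_term (a b : ℝ) (ha : 0 < a) (hb : 0 < b) : a - b ≤ a * Real.log (a / b) := by
  have hlog := Real.log_le_sub_one_of_pos (div_pos hb ha)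
  rw [Real.log_div hb.ne' ha.ne'] at hlog
  rw [Real.log_div ha.ne' hb.ne']
  have h4 : a * (Real.log b - Real.log a) ≤ a * (b / a - 1) :=
    mul_le_mul_of_nonneg_left hlog ha.le
  have h5 : a * (b / a - 1) = b - a := by field_simp
  rw [h5] at h4
  nlinarith [h4]

/-- Capping characterization of the Bregman projection onto the set of
ε-smooth distributions (Herbster–Warmuth). -/
theorem capping_is_projection
    (n : ℕ) (hn : 1 ≤ n) (ε : ℝ) (hε0 : 0 < ε) (hε1 : ε < 1)
    (hεn : 1 < ε * n) (c : ℝ) (hc : c = 1 / (ε * n))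
    (q : Fin n → ℝ) (hq : IsDistribution q) (hqpos : ∀ i, 0 < q i)
    (hsorted : ∀ i j : Fin n, i ≤ j → q j ≤ q i)
    (hnotsmooth : ¬ IsSmooth ε q) :
    (∃ m : ℕ, (1 ≤ m ∧ m < n ∧ (m : ℝ) * c ≤ 1 ∧ 0 < restSum q m) ∧
        IsDistribution (capped q c m) ∧ IsSmooth ε (capped q c m)) ∧
    ∀ m : ℕ, ((1 ≤ m ∧ m < n ∧ (m : ℝ) * c ≤ 1 ∧ 0 < restSum q m) ∧
        IsDistribution (capped q c m) ∧ IsSmooth ε (capped q c m)) →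
      (∀ m' : ℕ, ((1 ≤ m' ∧ m' < n ∧ (m' : ℝ) * c ≤ 1 ∧ 0 < restSum q m') ∧
        IsDistribution (capped q c m') ∧ IsSmooth ε (capped q c m')) → m ≤ m') →
      ∀ p : Fin n → ℝ, IsDistribution p → IsSmooth ε p →
        RE (capped q c m) q ≤ RE p q := by
  have hnpos : (0:ℝ) < n := by
    have : (1:ℝ) ≤ n := by exact_mod_cast hn
    linarith
  have hεnpos : (0:ℝ) < ε * n := by positivity
  have hcpos : 0 < c := by rw [hc]; positivity
  have hcεn : c * (ε * n) = 1 := by rw [hc]; field_simp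
  have hc1 : c < 1 := by
    rw [hc]
    rw [div_lt_one hεnpos]; exact hεn
  constructor
  · -- existence
    set M := Nat.floor (ε * n) with hM
    have hM1 : 1 ≤ M := Nat.le_floor (by exact_mod_cast hεn.le)
    have hMle : (M:ℝ) ≤ ε * n := Nat.floor_le hεnpos.le
    have hMltn : (M:ℝ) < n := lt_of_le_of_lt hMle (by nlinarith)
    have hMn : M < n := by exact_mod_cast hMltn
    have hMc : (M:ℝ) * c ≤ 1 := by nlinarith
    have hMc1 : 1 - (M:ℝ) * c ≤ c := by
      have h2 : ε * n < M + 1 := Nat.lt_floor_add_one _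
      nlinarith
    have h0 : (0:ℝ) ≤ 1 - (M:ℝ) * c := by linarith
    have hR : 0 < restSum q M := restSum_pos q hqpos hMn
    refine ⟨M, ⟨hM1, hMn, hMc, hR⟩, ⟨?_, sum_capped_eq_one q c M hMn.le hR.ne'⟩, ?_⟩
    · intro i
      simp only [capped]
      split
      · exact hcpos.le
      · exact div_nonneg (mul_nonneg (hqpos i).le h0) hR.le
    · intro i
      simp only [capped]
      rw [← hc]
      split
      · exact le_refl c
      · next hi =>
        have hi' : M ≤ (i:ℕ) := not_lt.mp hi
        have hqiR : q i ≤ restSum q M := single_le_restSum q hqpos i hi'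
        rw [div_le_iff₀ hR]
        nlinarith [(hqpos i).le]
  · -- projection
    rintro m ⟨⟨hm1, hmn, hmc, hR⟩, hdist, hsmooth⟩ hmin p hp hps
    obtain ⟨m', rfl⟩ : ∃ k, m = k + 1 := ⟨m - 1, by omega⟩
    have hm'n : m' < n := by omega
    set idx : Fin n := ⟨m', hm'n⟩ with hidx
    -- the key inequality at index m'
    have hkey0 : c * restSum q (m' + 1) ≤ q idx * (1 - (↑(m' + 1) : ℝ) * c) := by
      rcases Nat.eq_zero_or_pos m' with rfl | hm'1
      · -- m = 1 case
        have h0 : c < q idx := by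
          rw [IsSmooth] at hnotsmooth
          push_neg at hnotsmooth
          obtain ⟨i, hi⟩ := hnotsmooth
          rw [← hc] at hi
          exact lt_of_lt_of_le hi (hsorted idx i (by simp [hidx, Fin.le_def]))
        have h1 : restSum q 0 = q idx + restSum q 1 := restSum_succ q 0 hm'n
        have h2 : restSum q 0 = 1 := by
          rw [← hq.2]
          unfold restSum
          apply Finset.sum_congr _ (fun _ _ => rfl)
          ext j; simp
        push_cast
        nlinarith [hcpos]
      · -- m ≥ 2 case: use minimality at m'
        have hnot : ¬ (((1 ≤ m' ∧ m' < n ∧ (m' : ℝ) * c ≤ 1 ∧ 0 < restSum q m') ∧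
            IsDistribution (capped q c m') ∧ IsSmooth ε (capped q c m'))) := by
          intro h
          have := hmin m' h
          omega
        have hm'c : (m' : ℝ) * c ≤ 1 := by
          have : (m' : ℝ) * c ≤ (↑(m' + 1) : ℝ) * c := by
            push_cast
            nlinarith [hcpos]
          linarith
        have hR' : 0 < restSum q m' := restSum_pos q hqpos hm'n
        have hdist' : IsDistribution (capped q c m') := by
          constructor
          · intro i
            simp only [capped]
            split
            · exact hcpos.le
            · exact div_nonneg (mul_nonneg (hqpos i).le (by linarith)) hR'.le
          · exact sum_capped_eq_one q c m' hm'n.le hR'.ne'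
        have hnotsm : ¬ IsSmooth ε (capped q c m') := by
          intro h
          exact hnot ⟨⟨hm'1, hm'n, hm'c, hR'⟩, hdist', h⟩
        rw [IsSmooth] at hnotsm
        push_neg at hnotsm
        obtain ⟨i, hi⟩ := hnotsm
        rw [← hc] at hi
        have him : m' ≤ (i : ℕ) := by
          by_contra hlt
          push_neg at hlt
          simp only [capped, if_pos hlt] at hi
          exact lt_irrefl c hi
        simp only [capped, if_neg (not_lt.mpr him)] at hi
        have hqi : q i ≤ q idx := hsorted idx i (by simp [hidx, Fin.le_def, him])
        have hstep : c * restSum q m' < q idx * (1 - (m' : ℝ) * c) := by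
          rw [lt_div_iff₀ hR'] at hi
          nlinarith [hqpos i, hm'c]
        have hsucc : restSum q m' = q idx + restSum q (m' + 1) := restSum_succ q m' hm'n
        push_cast
        push_cast at hstep
        nlinarith
    have hpos1 : 0 < 1 - (↑(m' + 1) : ℝ) * c := by
      nlinarith [hqpos idx, hcpos, hR]
    have hkey : ∀ i : Fin n, (i : ℕ) < m' + 1 →
        c * restSum q (m' + 1) ≤ q i * (1 - (↑(m' + 1) : ℝ) * c) := by
      intro i hi
      have : q idx ≤ q i := hsorted i idx (by simp [hidx, Fin.le_def]; omega)
      nlinarith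
    -- positivity of capped
    have hPpos : ∀ i, 0 < capped q c (m' + 1) i := by
      intro i
      simp only [capped]
      split
      · exact hcpos
      · exact div_pos (mul_pos (hqpos i) hpos1) hR
    set L : ℝ := Real.log ((1 - (↑(m' + 1) : ℝ) * c) / restSum q (m' + 1)) with hL
    -- decomposition of RE p q
    have e1 : RE p q = RE p (capped q c (m' + 1))
        + ∑ i, p i * Real.log (capped q c (m' + 1) i / q i) := by
      unfold RE
      rw [← Finset.sum_add_distrib]
      apply Finset.sum_congr rfl
      intro i _
      by_cases hpi : p i = 0
      · simp [hpi]
      · rw [if_neg hpi, if_neg hpi]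
        have : Real.log (p i / q i)
            = Real.log (p i / capped q c (m' + 1) i)
              + Real.log (capped q c (m' + 1) i / q i) := by
          rw [Real.log_div hpi (hqpos i).ne', Real.log_div hpi (hPpos i).ne',
            Real.log_div (hPpos i).ne' (hqpos i).ne']
          ring
        rw [this]
        ring
    have e2 : RE (capped q c (m' + 1)) q
        = ∑ i, capped q c (m' + 1) i * Real.log (capped q c (m' + 1) i / q i) := by
      unfold RE
      exact Finset.sum_congr rfl (fun i _ => if_neg (hPpos i).ne')
    -- Gibbs: RE p P ≥ 0
    have e3 : 0 ≤ RE p (capped q c (m' + 1)) := by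
      have hterm : ∀ i : Fin n, p i - capped q c (m' + 1) i
          ≤ (if p i = 0 then 0 else p i * Real.log (p i / capped q c (m' + 1) i)) := by
        intro i
        by_cases hpi : p i = 0
        · rw [if_pos hpi, hpi]
          linarith [hPpos i]
        · rw [if_neg hpi]
          exact gibbs_term (p i) _ (lt_of_le_of_ne (hp.1 i) (Ne.symm hpi)) (hPpos i)
      calc (0:ℝ) = ∑ i, (p i - capped q c (m' + 1) i) := by
            rw [Finset.sum_sub_distrib, hp.2, hdist.2]; ring
        _ ≤ _ := Finset.sum_le_sum (fun i _ => hterm i)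
    -- the linear term is nonnegative
    have e4 : 0 ≤ ∑ i, (p i - capped q c (m' + 1) i)
        * Real.log (capped q c (m' + 1) i / q i) := by
      have hsplit := sum_split (n := n) (m := m' + 1)
        (fun i => (p i - capped q c (m' + 1) i) * Real.log (capped q c (m' + 1) i / q i))
      set A := Finset.univ.filter (fun i : Fin n => (i:ℕ) < m' + 1) with hA
      set B := Finset.univ.filter (fun i : Fin n => m' + 1 ≤ (i:ℕ)) with hB
      have hAmem : ∀ i ∈ A, (i:ℕ) < m' + 1 := by
        intro i hi; rw [hA] at hi; simpa using hi
      have hBmem : ∀ i ∈ B, m' + 1 ≤ (i:ℕ) := by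
        intro i hi; rw [hB] at hi; simpa using hi
      -- value on A
      have hPA : ∀ i ∈ A, capped q c (m' + 1) i = c := by
        intro i hi
        simp [capped, hAmem i hi]
      -- ratio on B
      have hratB : ∀ i ∈ B, Real.log (capped q c (m' + 1) i / q i) = L := by
        intro i hi
        have heq : capped q c (m' + 1) i / q i
            = (1 - (↑(m' + 1) : ℝ) * c) / restSum q (m' + 1) := by
          simp only [capped, if_neg (not_lt.mpr (hBmem i hi))]
          rw [mul_comm (q i) (1 - (↑(m' + 1) : ℝ) * c), div_div,
            mul_div_mul_right _ _ (hqpos i).ne']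
        rw [heq]
      have hsumA_P : ∑ i ∈ A, capped q c (m' + 1) i = (↑(m' + 1) : ℝ) * c :=
        sum_A_capped q c (m' + 1) (by omega)
      have hsumB_P : ∑ i ∈ B, capped q c (m' + 1) i = 1 - (↑(m' + 1) : ℝ) * c :=
        sum_B_capped q c (m' + 1) hR.ne'
      have hsum_p : ∑ i ∈ A, p i + ∑ i ∈ B, p i = 1 := by
        rw [← hp.2]; exact (sum_split (n := n) (m := m' + 1) p).symm
      -- B part
      have hBsum : ∑ i ∈ B, (p i - capped q c (m' + 1) i)
          * Real.log (capped q c (m' + 1) i / q i)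
          = ((↑(m' + 1) : ℝ) * c - ∑ i ∈ A, p i) * L := by
        rw [Finset.sum_congr rfl (fun i hi => by rw [hratB i hi]), ← Finset.sum_mul,
          Finset.sum_sub_distrib, hsumB_P]
        have : ∑ i ∈ B, p i = 1 - ∑ i ∈ A, p i := by linarith
        rw [this]
        ring
      -- A part bound
      have hApt : ∀ i ∈ A, (p i - c) * L
          ≤ (p i - capped q c (m' + 1) i) * Real.log (capped q c (m' + 1) i / q i) := by
        intro i hi
        rw [hPA i hi]
        have hlogle : Real.log (c / q i) ≤ L := by
          rw [hL]
          apply Real.log_le_log (div_pos hcpos (hqpos i))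
          rw [div_le_div_iff₀ (hqpos i) hR]
          have := hkey i (hAmem i hi)
          nlinarith
        have hpc : p i - c ≤ 0 := by
          have := hps i
          rw [← hc] at this
          linarith
        exact mul_le_mul_of_nonpos_left hlogle hpc
      have hAsum : ((∑ i ∈ A, p i) - (↑(m' + 1) : ℝ) * c) * L
          ≤ ∑ i ∈ A, (p i - capped q c (m' + 1) i)
              * Real.log (capped q c (m' + 1) i / q i) := by
        have : ((∑ i ∈ A, p i) - (↑(m' + 1) : ℝ) * c) * L = ∑ i ∈ A, (p i - c) * L := by
          rw [← Finset.sum_mul, Finset.sum_sub_distrib, Finset.sum_const,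
            card_filter_lt' n (m' + 1) (by omega), nsmul_eq_mul]
        rw [this]
        exact Finset.sum_le_sum hApt
      rw [hsplit, hBsum]
      linarith [hAsum]
    -- combine
    have e5 : ∑ i, (p i - capped q c (m' + 1) i) * Real.log (capped q c (m' + 1) i / q i)
        = (∑ i, p i * Real.log (capped q c (m' + 1) i / q i))
          - ∑ i, capped q c (m' + 1) i * Real.log (capped q c (m' + 1) i / q i) := by
      rw [← Finset.sum_sub_distrib]
      exact Finset.sum_congr rfl (fun i _ => by ring)
    linarith [e1, e2, e3, e4, e5]
end

section
/- Let n ≥ 1, ε > 0, let D be an ε-smooth distribution on a sample of n points with labels y : Fin n → ℝ taking values in {−1,1}, let H be a nonempty set of hypotheses Fin n → ℝ taking values in {−1,1}, and let opt = inf over h' ∈ H of the empirical error |{i : h'(i) ≠ y(i)}|/n. Suppose β ∈ [0,1/2), ε ≥ 2·opt/(1/2−β), and suppose h : Fin n → ℝ (with values in {−1,1}) satisfies the weak agnostic guarantee ∑_{i : h(i) ≠ y(i)} D(i) ≤ (inf over h' ∈ H of ∑_{i : h'(i) ≠ y(i)} D(i)) + β. Then ∑_{i : h(i) ≠ y(i)}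 D(i) ≤ 1/2 − (1/2)·(1/2 − β). -/
/-!
An `ε`-smooth distribution gives a set of points at most `1/ε` times its empirical mass, so
`ε · inf_H err_D ≤ opt ≤ ε (1/2 - β) / 2`. Hence `inf_H err_D ≤ (1/2 - β)/2`, and the agnostic
guarantee gives `err_D(h) ≤ (1/2 - β)/2 + β = 1/2 - (1/2)(1/2 - β)`.
-/

open Finset

theorem IsSmooth.mul_sum_le_card_div {n : ℕ} {ε : ℝ} {D : Fin n → ℝ} (hD : IsSmooth ε D)
    (hε : 0 < ε) (s : Finset (Fin n)) : ε * ∑ i ∈ s, D i ≤ (#s : ℝ) / n :=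
  calc ε * ∑ i ∈ s, D i ≤ ε * (#s * (1 / (ε * n))) := by
        gcongr
        simpa only [nsmul_eq_mul] using sum_le_card_nsmul s D _ fun i _ => hD i
    _ = #s / n := by field_simp

theorem mul_csInf_image_le_csInf_image {α : Type*} {S : Set α} {f g : α → ℝ} {c : ℝ}
    (hS : S.Nonempty) (hf : BddBelow (f '' S)) (hc : 0 ≤ c) (hfg : ∀ x ∈ S, c * f x ≤ g x) :
    c * sInf (f '' S) ≤ sInf (g '' S) := by
  refine le_csInf (hS.image g) ?_
  rintro _ ⟨x, hx, rfl⟩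
  calc c * sInf (f '' S) ≤ c * f x := by gcongr; exact csInf_le hf ⟨x, hx, rfl⟩
    _ ≤ g x := hfg x hx

theorem agnostic_learner_is_weak_learner_general
    (n : ℕ) (ε : ℝ) (hε : 0 < ε)
    (y : Fin n → ℝ)
    (D : Fin n → ℝ) (hD : IsDistribution D) (hsmooth : IsSmooth ε D)
    (H : Set (Fin n → ℝ)) (hHne : H.Nonempty)
    (opt : ℝ)
    (hopt : opt = sInf ((fun h' : Fin n → ℝ =>
      ((Finset.univ.filter (fun i => h' i ≠ y i)).card : ℝ) / n) '' H))
    (β : ℝ) (hβ : β < 1 / 2)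
    (hεopt : ε ≥ 2 * opt / (1 / 2 - β))
    (h : Fin n → ℝ)
    (hweak : ∑ i ∈ Finset.univ.filter (fun i => h i ≠ y i), D i ≤
      sInf ((fun h' : Fin n → ℝ =>
        ∑ i ∈ Finset.univ.filter (fun i => h' i ≠ y i), D i) '' H) + β) :
    ∑ i ∈ Finset.univ.filter (fun i => h i ≠ y i), D i ≤
      1 / 2 - (1 / 2) * (1 / 2 - β) := by
  set errD := fun h' : Fin n → ℝ => ∑ i ∈ Finset.univ.filter (fun i => h' i ≠ y i), D i
  have hbdd : BddBelow (errD '' H) :=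
    ⟨0, by rintro _ ⟨h', -, rfl⟩; exact sum_nonneg fun i _ => hD.1 i⟩
  have hinf_opt : ε * sInf (errD '' H) ≤ opt := hopt ▸
    mul_csInf_image_le_csInf_image hHne hbdd hε.le fun h' _ => hsmooth.mul_sum_le_card_div hε _
  have hopt_le : 2 * opt ≤ ε * (1 / 2 - β) := by
    have := (div_le_iff₀ (by linarith : (0 : ℝ) < 1 / 2 - β)).mp hεopt
    linarith
  have hinf : sInf (errD '' H) ≤ (1 / 2 - β) / 2 :=
    le_of_mul_le_mul_left (by linarith : ε * sInf (errD '' H) ≤ ε * ((1 / 2 - β) / 2)) hε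
  linarith

/-- Under ε-smooth distributions with ε ≥ 2·err_S(H)/(1/2−β), a β-weak
agnostic learner is a γ-weak learner with γ ≥ (1/2)·(1/2−β). -/
theorem agnostic_learner_is_weak_learner
    (n : ℕ) (hn : 1 ≤ n) (ε : ℝ) (hε : 0 < ε)
    (y : Fin n → ℝ) (hy : ∀ i, y i = -1 ∨ y i = 1)
    (D : Fin n → ℝ) (hD : IsDistribution D) (hsmooth : IsSmooth ε D)
    (H : Set (Fin n → ℝ)) (hHne : H.Nonempty)
    (hHval : ∀ h' ∈ H, ∀ i, h' i = -1 ∨ h' i = 1)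
    (opt : ℝ)
    (hopt : opt = sInf ((fun h' : Fin n → ℝ =>
      ((Finset.univ.filter (fun i => h' i ≠ y i)).card : ℝ) / n) '' H))
    (β : ℝ) (hβ0 : 0 ≤ β) (hβ : β < 1 / 2)
    (hεopt : ε ≥ 2 * opt / (1 / 2 - β))
    (h : Fin n → ℝ) (hhval : ∀ i, h i = -1 ∨ h i = 1)
    (hweak : ∑ i ∈ Finset.univ.filter (fun i => h i ≠ y i), D i ≤
      sInf ((fun h' : Fin n → ℝ =>
        ∑ i ∈ Finset.univ.filter (fun i => h' i ≠ y i), D i) '' H) + β) :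
    ∑ i ∈ Finset.univ.filter (fun i => h i ≠ y i), D i ≤
      1 / 2 - (1 / 2) * (1 / 2 - β) :=
  agnostic_learner_is_weak_learner_general n ε hε y D hD hsmooth H hHne opt hopt β hβ hεopt h hweak
end
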